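/- Maximality of open active sets: Let k ≥ 1 and let f : ℝⁿ → ℝ admit an efficient-LIG C^k Min-type representation {α₁, …, α_m} at q. Call an open set O ⊆ ℝⁿ an admissible germ at q if q ∈ closure(O), f is C^k on O, and for every neighborhood W of q there is a neighborhood W' ⊆ W of q with O ∩ W' nonempty and connected. Then: (a) each open active set Aᵢ° is an admissible germ at q; (b) for every admissible germ O at q there exist an index i and a neighborhood W of q with O ∩ W ⊆ Aᵢ°; and (c) if in addition Aᵢ° ∩ W₀ ⊆ O for some neighborhood W₀ of q, then O ∩ W₁ = Aᵢ° ∩ W₁ for some neighborhood W₁ of q; i.e., the germs of the Aᵢ° at q are exactly the maximal germs of connected open sets on which f is C^k. -/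

import Mathlib

noncomputable section

open Set

/-- Euclidean space `ℝⁿ`. -/
abbrev Euc (n : ℕ) : Type := EuclideanSpace ℝ (Fin n)

/-- `f` admits the `C^k` Min-type representation `{α₁, …, α_m}` at `q` on the specific
neighborhood `N`: each `αᵢ` is `C^k` on `N` and `f = min αᵢ` on `N`. -/
def IsMinTypeRepOn {n : ℕ} (k : ℕ) {m : ℕ} (f : Euc n → ℝ) (α : Fin m → Euc n → ℝ)
    (q : Euc n) (N : Set (Euc n)) : Prop :=
  IsOpen N ∧ q ∈ N ∧ (∀ i, ContDiffOn ℝ k (α i) N) ∧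
    ∀ x ∈ N, (∀ i, f x ≤ α i x) ∧ ∃ i, f x = α i x

/-- `f` admits the `C^k` Min-type representation `{α₁, …, α_m}` at `q`. -/
def IsMinTypeRep {n : ℕ} (k : ℕ) {m : ℕ} (f : Euc n → ℝ) (α : Fin m → Euc n → ℝ)
    (q : Euc n) : Prop :=
  ∃ N : Set (Euc n), IsMinTypeRepOn k f α q N

/-- `O` is an admissible germ at `q` for `f`: `O` is open, `q ∈ closure O`, `f` is `C^k` on
`O`, and for every neighborhood `W` of `q` there is a smaller neighborhood `W' ⊆ W` of `q`
with `O ∩ W'` nonempty and connected. -/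
def IsAdmissibleGerm {n : ℕ} (k : ℕ) (f : Euc n → ℝ) (q : Euc n) (O : Set (Euc n)) : Prop :=
  IsOpen O ∧ q ∈ closure O ∧ ContDiffOn ℝ k f O ∧
    ∀ W ∈ nhds q, ∃ W' ∈ nhds q, W' ⊆ W ∧ IsConnected (O ∩ W')

/-!
All `αⱼ` are active at `q`, since an inactive one could be dropped from the representation. As the
gradients are in general position, there is a direction `v` along which every `αⱼ - αᵢ` (`j ≠ i`)
strictly increases near `q`. Flowing along `v` inside a thin tube around the segment from `q` to
`q + T • v` carries every point of `Aᵢ°` into the open region where `αᵢ` alone is minimal and on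
to the far end of the tube, which gives (a). For (b): wherever `f` is differentiable, two active
functions touch `f` from above and so share its derivative; since the `Dαⱼ` stay pairwise distinct
near `q`, a connected open set on which `f` is `C¹` lies in a single region `{αᵢ < αⱼ, j ≠ i}`.
These regions are pairwise disjoint and `Aᵢ°` accumulates at `q`, which gives (c).
-/

open Filter Topology Metric Function

theorem IsPreconnected.exists_subset_of_subset_iUnion {X ι : Type*} [TopologicalSpace X]
    {s : Set X} {U : ι → Set X} (hs : IsPreconnected s) (hne : s.Nonempty)
    (hU : ∀ i, IsOpen (U i)) (hdisj : Pairwise (Disjoint on U)) (hsU : s ⊆ ⋃ i, U i) :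
    ∃ i, s ⊆ U i := by
  obtain ⟨x, hx⟩ := hne
  obtain ⟨i, hxi⟩ := mem_iUnion.1 (hsU hx)
  refine ⟨i, hs.subset_left_of_subset_union (hU i) (v := ⋃ (j) (_ : j ≠ i), U j)
    (isOpen_biUnion fun j _ => hU j) (disjoint_iUnion₂_right.2 fun j hj => hdisj hj.symm)
    (fun y hy => ?_) ⟨x, hx, hxi⟩⟩
  obtain ⟨j, hyj⟩ := mem_iUnion.1 (hsU hy)
  rcases eq_or_ne j i with rfl | hji
  · exact Or.inl hyj
  · exact Or.inr (mem_biUnion hji hyj)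

theorem eventually_injective_of_continuousAt {X Y ι : Type*} [TopologicalSpace X]
    [TopologicalSpace Y] [T2Space Y] [Finite ι] {F : ι → X → Y} {q : X}
    (hF : ∀ j, ContinuousAt (F j) q) (hinj : Injective fun j => F j q) :
    ∀ᶠ x in 𝓝 q, Injective fun j => F j x := by
  have : ∀ j l, ∀ᶠ x in 𝓝 q, F j x = F l x → j = l := fun j l => by
    rcases eq_or_ne j l with rfl | hjl
    · exact .of_forall fun _ _ => rfl
    · exact (((hF j).ne_iff_eventually_ne (hF l)).1 (hinj.ne hjl)).mono fun x hx h => absurd h hx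
  simpa only [Injective, eventually_all] using this

theorem LinearIndependent.exists_inner_eq_one {E ι : Type*} [NormedAddCommGroup E]
    [InnerProductSpace ℝ E] [FiniteDimensional ℝ E] {u : ι → E} (hu : LinearIndependent ℝ u) :
    ∃ v : E, ∀ j, inner ℝ (u j) v = 1 := by
  obtain ⟨ψ, hψ⟩ := LinearMap.dualMap_surjective_of_injective hu
    (Finsupp.linearCombination ℝ fun _ : ι => (1 : ℝ))
  refine ⟨(InnerProductSpace.toDual ℝ E).symm (LinearMap.toContinuousLinearMap ψ), fun j => ?_⟩
  rw [real_inner_comm, InnerProductSpace.toDual_symm_apply, LinearMap.coe_toContinuousLinearMap']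
  simpa using LinearMap.congr_fun hψ (Finsupp.single j 1)

theorem AffineIndependent.exists_inner_sub_eq_one {E ι : Type*} [NormedAddCommGroup E]
    [InnerProductSpace ℝ E] [FiniteDimensional ℝ E] {p : ι → E} (hp : AffineIndependent ℝ p)
    (i : ι) : ∃ v : E, ∀ j ≠ i, inner ℝ (p j - p i) v = 1 := by
  obtain ⟨v, hv⟩ := ((affineIndependent_iff_linearIndependent_vsub ℝ p i).1 hp).exists_inner_eq_one
  exact ⟨v, fun j hj => hv ⟨j, hj⟩⟩

theorem HasStrictFDerivAt.exists_mem_nhds_lt_apply_add_smul {E : Type*} [NormedAddCommGroup E]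
    [NormedSpace ℝ E] {g : E → ℝ} {L : E →L[ℝ] ℝ} {q v : E} (hg : HasStrictFDerivAt g L q)
    (hv : 0 < L v) :
    ∃ s ∈ 𝓝 q, ∀ x ∈ s, ∀ u : ℝ, 0 < u → x + u • v ∈ s → g x < g (x + u • v) := by
  obtain ⟨c, hc0, hc⟩ := exists_pos_mul_lt hv ‖v‖
  obtain ⟨s, hs, happrox⟩ :=
    hg.approximates_deriv_on_nhds (c := c.toNNReal) (Or.inr (Real.toNNReal_pos.2 hc0))
  refine ⟨s, hs, fun x hx u hu hxu => ?_⟩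
  have h := (abs_le.1 (happrox _ hxu _ hx)).1
  simp only [add_sub_cancel_left, map_smul, smul_eq_mul, norm_smul, Real.norm_of_nonneg hu.le,
    Real.coe_toNNReal _ hc0.le] at h
  nlinarith [mul_pos hu (sub_pos.2 hc)]

theorem fderiv_eq_of_eventually_le_of_eq {E : Type*} [NormedAddCommGroup E] [NormedSpace ℝ E]
    {g h : E → ℝ} {x : E} (hg : DifferentiableAt ℝ g x) (hh : DifferentiableAt ℝ h x)
    (hle : ∀ᶠ y in 𝓝 x, g y ≤ h y) (heq : g x = h x) : fderiv ℝ g x = fderiv ℝ h x := by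
  have hmin : IsLocalMin (fun y => h y - g y) x :=
    hle.mono fun y hy => by simpa only [heq, sub_self, sub_nonneg] using hy
  have := hmin.fderiv_eq_zero
  rw [fderiv_fun_sub hh hg, sub_eq_zero] at this
  exact this.symm

section Tube

variable {E : Type*} [NormedAddCommGroup E] [NormedSpace ℝ E]

def tube (q v : E) (T δ : ℝ) : Set E := ⋃ t ∈ Icc (0 : ℝ) T, ball (q + t • v) δ

variable {q v : E} {T δ : ℝ}

theorem isOpen_tube : IsOpen (tube q v T δ) := isOpen_biUnion fun _ _ => isOpen_ball

theorem tube_mem_nhds (hT : 0 ≤ T) (hδ : 0 < δ) : tube q v T δ ∈ 𝓝 q :=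
  isOpen_tube.mem_nhds (mem_biUnion (left_mem_Icc.2 hT) (by simpa using hδ))

theorem tube_subset_ball : tube q v T δ ⊆ ball q (T * ‖v‖ + δ) := by
  intro y hy
  obtain ⟨t, ⟨ht0, htT⟩, hyt⟩ := mem_iUnion₂.1 hy
  rw [mem_ball] at hyt ⊢
  calc dist y q ≤ dist y (q + t • v) + dist (q + t • v) q := dist_triangle _ _ _
    _ = dist y (q + t • v) + t * ‖v‖ := by
        rw [dist_self_add_left, norm_smul, Real.norm_of_nonneg ht0]
    _ < T * ‖v‖ + δ := by nlinarith [norm_nonneg v]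

theorem add_smul_mem_ball_add_smul {y : E} {t : ℝ} (hy : y ∈ ball (q + t • v) δ) (u : ℝ) :
    y + u • v ∈ ball (q + (t + u) • v) δ := by
  rwa [mem_ball, add_smul, ← add_assoc, dist_add_right]

theorem isPathConnected_inter_tube {S : Set E} (hT : 0 ≤ T) (hδ : 0 < δ)
    (hend : ball (q + T • v) δ ⊆ S)
    (hflow : ∀ y ∈ S ∩ tube q v T δ, ∀ u : ℝ, 0 ≤ u → y + u • v ∈ tube q v T δ →
      y + u • v ∈ S) :
    IsPathConnected (S ∩ tube q v T δ) := by
  have hend' : ball (q + T • v) δ ⊆ S ∩ tube q v T δ := fun z hz =>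
    ⟨hend hz, mem_biUnion (right_mem_Icc.2 hT) hz⟩
  refine ⟨q + T • v, hend' (mem_ball_self hδ), fun y hy => ?_⟩
  obtain ⟨t, ⟨ht0, htT⟩, hyt⟩ := mem_iUnion₂.1 hy.2
  have hflow_seg : segment ℝ y (y + (T - t) • v) ⊆ S ∩ tube q v T δ := by
    intro z hz
    rw [segment_eq_image'] at hz
    obtain ⟨θ, ⟨hθ0, hθ1⟩, rfl⟩ := hz
    simp only [add_sub_cancel_left, smul_smul]
    have hu : 0 ≤ θ * (T - t) := mul_nonneg hθ0 (sub_nonneg.2 htT)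
    have hmem : y + (θ * (T - t)) • v ∈ tube q v T δ :=
      mem_biUnion ⟨by linarith, by nlinarith⟩ (add_smul_mem_ball_add_smul hyt _)
    exact ⟨hflow y hy _ hu hmem, hmem⟩
  have hlast : y + (T - t) • v ∈ ball (q + T • v) δ := by
    simpa using add_smul_mem_ball_add_smul hyt (T - t)
  exact ((JoinedIn.of_segment_subset hflow_seg).trans (JoinedIn.of_segment_subset
    (((convex_ball _ _).segment_subset hlast (mem_ball_self hδ)).trans hend'))).symm

end Tube

section ActiveSets

variable {E ι : Type*} {f : E → ℝ} {α : ι → E → ℝ} {N : Set E} {q : E} {i : ι}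

def strictActiveSet (α : ι → E → ℝ) (N : Set E) (i : ι) : Set E :=
  {x ∈ N | ∀ j ≠ i, α i x < α j x}

theorem strictActiveSet_pairwise_disjoint : Pairwise (Disjoint on strictActiveSet α N) :=
  fun i j hij => disjoint_left.2 fun _ hi hj => (hi.2 j hij.symm).not_gt (hj.2 i hij)

theorem strictActiveSet_subset_activeSet
    (hmin : ∀ x ∈ N, (∀ j, f x ≤ α j x) ∧ ∃ j, f x = α j x) :
    strictActiveSet α N i ⊆ {x ∈ N | f x = α i x} := by
  rintro x ⟨hxN, hx⟩
  obtain ⟨hle, j, hj⟩ := hmin x hxN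
  rcases eq_or_ne j i with rfl | hji
  · exact ⟨hxN, hj⟩
  · exact absurd (hj ▸ hle i) (hx j hji).not_ge

variable [TopologicalSpace E]

theorem isOpen_strictActiveSet [Finite ι] (hN : IsOpen N) (hα : ∀ j, ContinuousOn (α j) N)
    (i : ι) : IsOpen (strictActiveSet α N i) := by
  refine isOpen_iff_mem_nhds.2 fun x ⟨hxN, hx⟩ => ?_
  have hαx : ∀ j, ContinuousAt (α j) x := fun j => (hα j).continuousAt (hN.mem_nhds hxN)
  filter_upwards [hN.mem_nhds hxN, eventually_all.2 fun j =>
    eventually_imp_distrib_left.2 fun hj => (hαx i).eventually_lt (hαx j) (hx j hj)]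
    with y hyN hy using ⟨hyN, hy⟩

theorem strictActiveSet_subset_interior [Finite ι] (hN : IsOpen N)
    (hα : ∀ j, ContinuousOn (α j) N) (hmin : ∀ x ∈ N, (∀ j, f x ≤ α j x) ∧ ∃ j, f x = α j x) :
    strictActiveSet α N i ⊆ interior {x ∈ N | f x = α i x} :=
  interior_maximal (strictActiveSet_subset_activeSet hmin) (isOpen_strictActiveSet hN hα i)

theorem exists_mem_nhds_inter_eq_interior_activeSet_inter [Finite ι] {O W W₀ : Set E} {j : ι}
    (hN : IsOpen N) (hα : ∀ j, ContinuousOn (α j) N)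
    (hmin : ∀ x ∈ N, (∀ j, f x ≤ α j x) ∧ ∃ j, f x = α j x)
    (hq : q ∈ closure (interior {x ∈ N | f x = α i x})) (hW : W ∈ 𝓝 q)
    (hOW : O ∩ W ⊆ strictActiveSet α N j) (hW₀ : W₀ ∈ 𝓝 q)
    (hAO : interior {x ∈ N | f x = α i x} ∩ W₀ ⊆ O) :
    ∃ W₁ ∈ 𝓝 q, O ∩ W₁ = interior {x ∈ N | f x = α i x} ∩ W₁ := by
  obtain ⟨x, ⟨hxW, hxW₀⟩, hxA⟩ := mem_closure_iff_nhds.1 hq _ (inter_mem hW hW₀)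
  have hxV : x ∈ strictActiveSet α N j := hOW ⟨hAO ⟨hxA, hxW₀⟩, hxW⟩
  obtain ⟨hxN, hxf⟩ := interior_subset hxA
  obtain rfl : j = i := by
    by_contra hji
    exact (hxV.2 i (Ne.symm hji)).not_ge (hxf ▸ (hmin x hxN).1 j)
  refine ⟨W ∩ W₀, inter_mem hW hW₀, Subset.antisymm ?_ ?_⟩
  · exact fun y ⟨hyO, hyW, hyW₀⟩ =>
      ⟨strictActiveSet_subset_interior hN hα hmin (hOW ⟨hyO, hyW⟩), hyW, hyW₀⟩
  · exact fun y ⟨hyA, hyW, hyW₀⟩ => ⟨hAO ⟨hyA, hyW₀⟩, hyW, hyW₀⟩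

end ActiveSets

section MinType

variable {E ι : Type*} [NormedAddCommGroup E] [NormedSpace ℝ E] {f : E → ℝ} {α : ι → E → ℝ}
  {N : Set E} {q : E} {i : ι}

theorem mem_strictActiveSet_of_injective_fderiv {x : E} (hxN : N ∈ 𝓝 x)
    (hf : DifferentiableAt ℝ f x) (hα : ∀ j, DifferentiableAt ℝ (α j) x)
    (hle : ∀ y ∈ N, ∀ j, f y ≤ α j y) (hinj : Injective fun j => fderiv ℝ (α j) x)
    (hi : f x = α i x) : x ∈ strictActiveSet α N i := by
  have hfderiv : ∀ j, f x = α j x → fderiv ℝ f x = fderiv ℝ (α j) x := fun j hj =>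
    fderiv_eq_of_eventually_le_of_eq hf (hα j) (eventually_of_mem hxN fun y hy => hle y hy j) hj
  refine ⟨mem_of_mem_nhds hxN, fun j hji => lt_of_le_of_ne (hi ▸ hle x (mem_of_mem_nhds hxN) j)
    fun hij => hji (hinj ((hfderiv j (hi.trans hij)).symm.trans (hfderiv i hi)))⟩

theorem exists_ball_forall_sub_lt_sub_apply_add_smul [Finite ι] {α' : ι → E →L[ℝ] ℝ} {v : E}
    (hα' : ∀ j, HasStrictFDerivAt (α j) (α' j) q) (hv : ∀ j ≠ i, α' i v < α' j v)
    {B : Set E} (hB : B ∈ 𝓝 q) :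
    ∃ r > 0, ball q r ⊆ B ∧ ∀ j ≠ i, ∀ x ∈ ball q r, ∀ u : ℝ, 0 < u → x + u • v ∈ ball q r →
      α j x - α i x < α j (x + u • v) - α i (x + u • v) := by
  have hgrow : ∀ j ≠ i, ∃ s ∈ 𝓝 q, ∀ x ∈ s, ∀ u : ℝ, 0 < u → x + u • v ∈ s →
      α j x - α i x < α j (x + u • v) - α i (x + u • v) := fun j hj =>
    ((hα' j).sub (hα' i)).exists_mem_nhds_lt_apply_add_smul (by simpa using hv j hj)
  choose! s hs hgrow using hgrow
  obtain ⟨r, hr, hball⟩ := Metric.mem_nhds_iff.1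
    (inter_mem hB ((biInter_mem (toFinite {j | j ≠ i})).2 hs))
  refine ⟨r, hr, fun x hx => (hball hx).1, fun j hj x hx u hu hxu => ?_⟩
  have hsub : ball q r ⊆ s j := fun y hy => mem_iInter₂.1 (hball hy).2 j hj
  exact hgrow j hj x (hsub hx) u hu (hsub hxu)

theorem exists_isPathConnected_interior_activeSet_inter [Finite ι] {α' : ι → E →L[ℝ] ℝ}
    {v : E} (hN : IsOpen N) (hqN : q ∈ N) (hα : ∀ j, ContinuousOn (α j) N)
    (hmin : ∀ x ∈ N, (∀ j, f x ≤ α j x) ∧ ∃ j, f x = α j x) (hact : ∀ j, α j q = α i q)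
    (hα' : ∀ j, HasStrictFDerivAt (α j) (α' j) q) (hv : ∀ j ≠ i, α' i v < α' j v) {W : Set E} (hW : W ∈ 𝓝 q) :
    ∃ W' ∈ 𝓝 q, W' ⊆ W ∧ IsPathConnected (interior {x ∈ N | f x = α i x} ∩ W') := by
  obtain ⟨r, hr, hrB, hgrow⟩ :=
    exists_ball_forall_sub_lt_sub_apply_add_smul hα' hv (inter_mem (hN.mem_nhds hqN) hW)
  have hVA := strictActiveSet_subset_interior (i := i) hN hα hmin
  set T := r / (2 * (‖v‖ + 1))
  have hT : 0 < T := by positivity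
  have hTv : T * ‖v‖ < r / 2 := by
    rw [div_mul_eq_mul_div, div_lt_div_iff₀ (by positivity) two_pos]
    nlinarith [norm_nonneg v]
  have hqT : q + T • v ∈ ball q r := by
    rw [mem_ball, dist_self_add_left, norm_smul, Real.norm_of_nonneg hT.le]; linarith
  have hend : q + T • v ∈ strictActiveSet α N i := ⟨(hrB hqT).1, fun j hj => by
    linarith [hgrow j hj q (mem_ball_self hr) T hT hqT, hact j]⟩
  obtain ⟨δ, hδ, hδV⟩ := Metric.isOpen_iff.1 (isOpen_strictActiveSet hN hα i) _ hend
  have htube : tube q v T (min δ (r / 2)) ⊆ ball q r :=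
    tube_subset_ball.trans (ball_subset_ball (by linarith [min_le_right δ (r / 2)]))
  refine ⟨_, tube_mem_nhds hT.le (by positivity), fun x hx => (hrB (htube hx)).2,
    isPathConnected_inter_tube hT.le (by positivity)
      ((ball_subset_ball (min_le_left _ _)).trans (hδV.trans hVA)) ?_⟩
  rintro y ⟨hyA, hyT⟩ u hu hyuT
  rcases hu.eq_or_lt with rfl | hu
  · simpa using hyA
  obtain ⟨hyN, hyf⟩ := interior_subset hyA
  refine hVA ⟨(hrB (htube hyuT)).1, fun j hj => ?_⟩
  linarith [hgrow j hj y (htube hyT) u hu (htube hyuT), hyf ▸ (hmin y hyN).1 j]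

end MinType

section MinTypeRep

variable {n k m : ℕ} {f : Euc n → ℝ} {q : Euc n}

theorem IsMinTypeRepOn.isMinTypeRep_succAbove {α : Fin (m + 1) → Euc n → ℝ} {N : Set (Euc n)}
    (hrep : IsMinTypeRepOn k f α q N) {i : Fin (m + 1)} (hi : f q < α i q) :
    IsMinTypeRep k f (fun l => α (i.succAbove l)) q := by
  obtain ⟨hN, hqN, hα, hmin⟩ := hrep
  have hαc : ∀ j, ∀ x ∈ N, ContinuousAt (α j) x := fun j x hx =>
    (hα j).continuousOn.continuousAt (hN.mem_nhds hx)
  refine ⟨{x ∈ N | ∃ j, α j x < α i x}, ?_, ?_, fun l => (hα _).mono (sep_subset _ _), ?_⟩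
  · refine isOpen_iff_mem_nhds.2 fun x ⟨hxN, j, hj⟩ => ?_
    filter_upwards [hN.mem_nhds hxN, (hαc j x hxN).eventually_lt (hαc i x hxN) hj]
      with y hyN hy using ⟨hyN, j, hy⟩
  · obtain ⟨j, hj⟩ := (hmin q hqN).2
    exact ⟨hqN, j, hj ▸ hi⟩
  · rintro x ⟨hxN, j, hj⟩
    obtain ⟨hle, l, hl⟩ := hmin x hxN
    have hli : l ≠ i := by
      rintro rfl
      exact (hl ▸ hle j).not_gt hj
    obtain ⟨l', rfl⟩ := Fin.exists_succAbove_eq hli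
    exact ⟨fun _ => hle _, l', hl⟩

theorem IsMinTypeRepOn.forall_apply_eq_of_efficient {α : Fin m → Euc n → ℝ} {N : Set (Euc n)}
    (hrep : IsMinTypeRepOn k f α q N)
    (heff : ∀ (m' : ℕ) (β : Fin m' → Euc n → ℝ), IsMinTypeRep k f β q → m ≤ m') :
    ∀ i, f q = α i q := by
  intro i
  obtain ⟨m', rfl⟩ := Nat.exists_eq_succ_of_ne_zero i.pos.ne'
  obtain ⟨-, hqN, -, hmin⟩ := id hrep
  refine ((hmin q hqN).1 i).eq_of_not_lt fun hi => ?_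
  exact (heff m' _ (hrep.isMinTypeRep_succAbove hi)).not_gt (Nat.lt_succ_self m')

variable {α : Fin m → Euc n → ℝ} {N : Set (Euc n)}

theorem isAdmissibleGerm_interior_activeSet (hk : 1 ≤ k) (hrep : IsMinTypeRepOn k f α q N)
    (hact : ∀ j, f q = α j q) (hLIG : AffineIndependent ℝ fun j => gradient (α j) q) (i : Fin m) :
    IsAdmissibleGerm k f q (interior {x ∈ N | f x = α i x}) := by
  obtain ⟨hN, hqN, hα, hmin⟩ := hrep
  have hα' : ∀ j, HasStrictFDerivAt (α j) (fderiv ℝ (α j) q) q := fun j =>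
    ((hα j).contDiffAt (hN.mem_nhds hqN)).hasStrictFDerivAt (by exact_mod_cast (by omega : k ≠ 0))
  obtain ⟨v, hv⟩ := hLIG.exists_inner_sub_eq_one i
  have hv' : ∀ j ≠ i, fderiv ℝ (α i) q v < fderiv ℝ (α j) q v := fun j hj => by
    have := hv j hj
    rw [inner_sub_left, gradient, gradient, InnerProductSpace.toDual_symm_apply,
      InnerProductSpace.toDual_symm_apply] at this
    linarith
  have hconn := fun W (hW : W ∈ 𝓝 q) =>
    exists_isPathConnected_interior_activeSet_inter hN hqN (fun j => (hα j).continuousOn) hmin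
      (fun j => (hact j).symm.trans (hact i)) hα' hv' hW
  refine ⟨isOpen_interior, mem_closure_iff_nhds.2 fun W hW => ?_, ?_, fun W hW => ?_⟩
  · obtain ⟨W', -, hW'W, hpc⟩ := hconn W hW
    obtain ⟨x, hxA, hxW'⟩ := hpc.nonempty
    exact ⟨x, hW'W hxW', hxA⟩
  · exact ((hα i).mono fun y hy => (interior_subset hy).1).congr fun y hy => (interior_subset hy).2
  · obtain ⟨W', hW', hW'W, hpc⟩ := hconn W hW
    exact ⟨W', hW', hW'W, hpc.isConnected⟩

theorem IsAdmissibleGerm.exists_inter_subset_strictActiveSet {O : Set (Euc n)} (hk : 1 ≤ k)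
    (hrep : IsMinTypeRepOn k f α q N) (hO : IsAdmissibleGerm k f q O)
    (hinj : Injective fun j => gradient (α j) q) :
    ∃ i, ∃ W ∈ 𝓝 q, O ∩ W ⊆ strictActiveSet α N i := by
  obtain ⟨hN, hqN, hα, hmin⟩ := hrep
  obtain ⟨hO, -, hfO, hOconn⟩ := hO
  have hk0 : (k : WithTop ℕ∞) ≠ 0 := by exact_mod_cast (by omega : k ≠ 0)
  have hinj' : ∀ᶠ x in 𝓝 q, Injective fun j => fderiv ℝ (α j) x :=
    eventually_injective_of_continuousAt
      (fun j => ((hα j).continuousOn_fderiv_of_isOpen hN (by exact_mod_cast hk)).continuousAt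
        (hN.mem_nhds hqN))
      (fun j l h => hinj (by simp only [gradient, h]))
  obtain ⟨W', hW', hW'sub, hconn⟩ := hOconn _ (inter_mem (hN.mem_nhds hqN) hinj')
  suffices O ∩ W' ⊆ ⋃ i, strictActiveSet α N i by
    obtain ⟨i, hi⟩ := hconn.isPreconnected.exists_subset_of_subset_iUnion hconn.nonempty
      (isOpen_strictActiveSet hN fun j => (hα j).continuousOn) strictActiveSet_pairwise_disjoint
      this
    exact ⟨i, W', hW', hi⟩
  rintro x ⟨hxO, hxW'⟩
  obtain ⟨hxN, hxinj⟩ := hW'sub hxW'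
  obtain ⟨j, hj⟩ := (hmin x hxN).2
  exact mem_iUnion.2 ⟨j, mem_strictActiveSet_of_injective_fderiv (hN.mem_nhds hxN)
    ((hfO.contDiffAt (hO.mem_nhds hxO)).differentiableAt hk0)
    (fun l => ((hα l).contDiffAt (hN.mem_nhds hxN)).differentiableAt hk0)
    (fun y hy => (hmin y hy).1) hxinj hj⟩

end MinTypeRep

theorem open_active_sets_maximal_general {n : ℕ} (k m : ℕ) (hk : 1 ≤ k)
    (f : Euc n → ℝ) (q : Euc n)
    (α : Fin m → Euc n → ℝ) (N : Set (Euc n))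
    (hrep : IsMinTypeRepOn k f α q N)
    (heff : ∀ (m' : ℕ) (β : Fin m' → Euc n → ℝ), IsMinTypeRep k f β q → m ≤ m')
    (hLIG : AffineIndependent ℝ fun i => gradient (α i) q) :
    (∀ i, IsAdmissibleGerm k f q (interior {x ∈ N | f x = α i x})) ∧
    (∀ O : Set (Euc n), IsAdmissibleGerm k f q O →
      ∃ i, ∃ W ∈ nhds q, O ∩ W ⊆ interior {x ∈ N | f x = α i x}) ∧
    (∀ (O : Set (Euc n)) (i : Fin m), IsAdmissibleGerm k f q O →
      (∃ W₀ ∈ nhds q, interior {x ∈ N | f x = α i x} ∩ W₀ ⊆ O) →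
      ∃ W₁ ∈ nhds q, O ∩ W₁ = interior {x ∈ N | f x = α i x} ∩ W₁) := by
  have hA := isAdmissibleGerm_interior_activeSet hk hrep (hrep.forall_apply_eq_of_efficient heff)
    hLIG
  have hV := fun O (hO : IsAdmissibleGerm k f q O) =>
    hO.exists_inter_subset_strictActiveSet hk hrep hLIG.injective
  obtain ⟨hN, -, hα, hmin⟩ := hrep
  have hαc : ∀ j, ContinuousOn (α j) N := fun j => (hα j).continuousOn
  refine ⟨hA, fun O hO => ?_, fun O i hO ⟨W₀, hW₀, hAO⟩ => ?_⟩
  · obtain ⟨i, W, hW, hOW⟩ := hV O hO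
    exact ⟨i, W, hW, hOW.trans (strictActiveSet_subset_interior hN hαc hmin)⟩
  · obtain ⟨j, W, hW, hOW⟩ := hV O hO
    exact exists_mem_nhds_inter_eq_interior_activeSet_inter hN hαc hmin (hA i).2.1 hW hOW hW₀ hAO

/-- **Maximality of open active sets.** For an efficient-LIG `C^k` Min-type representation of
`f` at `q` on `N` (`k ≥ 1`), with active sets `Aᵢ = {x ∈ N | f x = αᵢ x}`:
(a) each `Aᵢ°` is an admissible germ at `q`;
(b) every admissible germ at `q` is, near `q`, contained in some `Aᵢ°`;
(c) an admissible germ containing some `Aᵢ°` near `q` agrees with `Aᵢ°` near `q`.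
So the germs of the `Aᵢ°` at `q` are exactly the maximal germs of connected open sets on which
`f` is `C^k`. -/
theorem open_active_sets_maximal {n : ℕ} (k m : ℕ) (hk : 1 ≤ k)
    (f : Euc n → ℝ) (hf : Continuous f) (q : Euc n)
    (α : Fin m → Euc n → ℝ) (N : Set (Euc n))
    (hrep : IsMinTypeRepOn k f α q N)
    (heff : ∀ (m' : ℕ) (β : Fin m' → Euc n → ℝ), IsMinTypeRep k f β q → m ≤ m')
    (hLIG : AffineIndependent ℝ fun i => gradient (α i) q) :
    (∀ i, IsAdmissibleGerm k f q (interior {x ∈ N | f x = α i x})) ∧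
    (∀ O : Set (Euc n), IsAdmissibleGerm k f q O →
      ∃ i, ∃ W ∈ nhds q, O ∩ W ⊆ interior {x ∈ N | f x = α i x}) ∧
    (∀ (O : Set (Euc n)) (i : Fin m), IsAdmissibleGerm k f q O →
      (∃ W₀ ∈ nhds q, interior {x ∈ N | f x = α i x} ∩ W₀ ⊆ O) →
      ∃ W₁ ∈ nhds q, O ∩ W₁ = interior {x ∈ N | f x = α i x} ∩ W₁) :=
  open_active_sets_maximal_general k m hk f q α N hrep heff hLIG
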